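/- arXiv:1510.08175 — 3 statements merged into one kernel-verified Lean document; each statement's English description precedes it below -/
import Mathlib

section
/- (Theorem 4, item 2.1) Suppose eTRS satisfies the Slater condition and (t*, λ*) with λ* ≥ 0 maximizes k(t,λ) := (Δ+1)λmin(D(t,λ)) − t − λc over t ∈ ℝ, λ ≥ 0, with λmin(D(t*,λ*)) = λmin(A). If λmin(A) < 0 is a simple eigenvalue of A, λ* > 0, and the linear system (A − λmin(A)·I)x = a − (λ*/2)b has two solutions x1 and x2 with ‖x1‖² = Δ, ‖x2‖² = Δ, and (bᵀx1 − c)(bᵀx2 − c) < 0, then strong duality fails for eTRS (p* ≠ d*). -/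
/-!
The multipliers `(-λmin(A), λ*)` certify `d* = k(t*, λ*)`. Evaluating the eigenvalue bound
`λmin(D(t*, λ*)) = λmin(A)` at the vector `(1, x)` shows that `k(t*, λ*)` bounds the Lagrangian
from below; conversely, homogenizing the nonnegativity of `L(·, λ₁, λ₂) - v` gives
`λmin(D(t, λ₂)) ≥ -λ₁` for a suitable `t`, so every dual value is at most `k(t, λ₂) ≤ k(t*, λ*)`.

If `p* = d*`, a primal optimum `x*` closes the gap. Both multipliers are positive, so complementary
slackness forces `‖x*‖² = Δ` and `bᵀx* = c`, and `x*` minimizes the Lagrangian, whence `x* - x₁`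
lies in the kernel of `A - λmin(A) I`, which is spanned by `x₂ - x₁`. On the line through `x₁` and
`x₂` the sphere `‖x‖² = Δ` contains only `x₁` and `x₂`, and neither lies on the hyperplane `bᵀx = c`.
-/

open Matrix

/-- The smallest eigenvalue of a real (symmetric) matrix. -/
noncomputable def lambdaMin {ι : Type} [Fintype ι] (M : Matrix ι ι ℝ) : ℝ :=
  sInf {μ : ℝ | ∃ v : ι → ℝ, v ≠ 0 ∧ M.mulVec v = μ • v}

/-- The multiplicity of the smallest eigenvalue: the dimension of Null(M - λmin(M)·I). -/
noncomputable def eigMult {ι : Type} [Fintype ι] [DecidableEq ι] (M : Matrix ι ι ℝ) : ℕ :=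
  Module.finrank ℝ (LinearMap.ker (M - lambdaMin M • (1 : Matrix ι ι ℝ)).mulVecLin)

/-- The bordered matrix D(t) = [[t, -aᵀ],[-a, A]]. -/
noncomputable def borderD {n : ℕ} (A : Matrix (Fin n) (Fin n) ℝ) (a : Fin n → ℝ) (t : ℝ) :
    Matrix (Unit ⊕ Fin n) (Unit ⊕ Fin n) ℝ :=
  Matrix.fromBlocks (Matrix.of fun (_ : Unit) (_ : Unit) => t)
    (Matrix.of fun (_ : Unit) (j : Fin n) => -a j)
    (Matrix.of fun (i : Fin n) (_ : Unit) => -a i) A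

/-- The bordered matrix D(t,λ) = [[t, (-a + (λ/2)b)ᵀ],[-a + (λ/2)b, A]]. -/
noncomputable def borderD2 {n : ℕ} (A : Matrix (Fin n) (Fin n) ℝ) (a b : Fin n → ℝ)
    (t l : ℝ) : Matrix (Unit ⊕ Fin n) (Unit ⊕ Fin n) ℝ :=
  borderD A (fun j => a j - (l / 2) * b j) t

/-- The objective xᵀAx - 2aᵀx. -/
noncomputable def objQ {n : ℕ} (A : Matrix (Fin n) (Fin n) ℝ) (a : Fin n → ℝ)
    (x : Fin n → ℝ) : ℝ :=
  x ⬝ᵥ A.mulVec x - 2 * (a ⬝ᵥ x)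

/-- The optimal value p* of eTRS. -/
noncomputable def pstar {n : ℕ} (A : Matrix (Fin n) (Fin n) ℝ) (a b : Fin n → ℝ)
    (c Δ : ℝ) : ℝ :=
  sInf {v : ℝ | ∃ x : Fin n → ℝ, x ⬝ᵥ x ≤ Δ ∧ b ⬝ᵥ x ≤ c ∧ v = objQ A a x}

/-- The Lagrangian of eTRS. -/
noncomputable def lagr {n : ℕ} (A : Matrix (Fin n) (Fin n) ℝ) (a b : Fin n → ℝ)
    (c Δ : ℝ) (x : Fin n → ℝ) (l1 l2 : ℝ) : ℝ :=
  objQ A a x + l1 * (x ⬝ᵥ x - Δ) + l2 * (b ⬝ᵥ x - c)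

/-- The Lagrangian dual value d* of eTRS:
the supremum over λ1, λ2 ≥ 0 of inf_x of the Lagrangian, encoded as the supremum of all
values that are lower bounds of the Lagrangian for some admissible multipliers. -/
noncomputable def dstar {n : ℕ} (A : Matrix (Fin n) (Fin n) ℝ) (a b : Fin n → ℝ)
    (c Δ : ℝ) : ℝ :=
  sSup {v : ℝ | ∃ l1 l2 : ℝ, 0 ≤ l1 ∧ 0 ≤ l2 ∧ ∀ x : Fin n → ℝ, v ≤ lagr A a b c Δ x l1 l2}

/-- x is a global optimal solution of eTRS. -/
def isOptimal {n : ℕ} (A : Matrix (Fin n) (Fin n) ℝ) (a b : Fin n → ℝ)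
    (c Δ : ℝ) (x : Fin n → ℝ) : Prop :=
  x ⬝ᵥ x ≤ Δ ∧ b ⬝ᵥ x ≤ c ∧
    ∀ y : Fin n → ℝ, y ⬝ᵥ y ≤ Δ → b ⬝ᵥ y ≤ c → objQ A a x ≤ objQ A a y

/-- The dual objective k(t,λ) = (Δ+1)·λmin(D(t,λ)) - t - λc. -/
noncomputable def ktl {n : ℕ} (A : Matrix (Fin n) (Fin n) ℝ) (a b : Fin n → ℝ)
    (c Δ : ℝ) (t l : ℝ) : ℝ :=
  (Δ + 1) * lambdaMin (borderD2 A a b t l) - t - l * c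

section LambdaMin

variable {ι : Type} [Fintype ι]

lemma dotProduct_self_pos {v : ι → ℝ} (hv : v ≠ 0) : 0 < v ⬝ᵥ v := by
  simpa using dotProduct_self_star_pos_iff.mpr hv

variable [DecidableEq ι]

lemma bddBelow_eigenvalueSet (M : Matrix ι ι ℝ) :
    BddBelow {μ : ℝ | ∃ v : ι → ℝ, v ≠ 0 ∧ M *ᵥ v = μ • v} := by
  refine ((Module.End.finite_hasEigenvalue (toLin' M)).subset ?_).bddBelow
  rintro μ ⟨v, hv, hMv⟩
  exact Module.End.hasEigenvalue_of_hasEigenvector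
    (Module.End.hasEigenvector_iff.mpr ⟨by simpa [Module.End.mem_eigenspace_iff] using hMv, hv⟩)

lemma lambdaMin_le_of_mulVec_eq {M : Matrix ι ι ℝ} {μ : ℝ} {v : ι → ℝ} (hv : v ≠ 0)
    (hMv : M *ᵥ v = μ • v) : lambdaMin M ≤ μ :=
  csInf_le (bddBelow_eigenvalueSet M) ⟨v, hv, hMv⟩

namespace Matrix.IsHermitian

variable {M : Matrix ι ι ℝ} (hM : M.IsHermitian)
include hM

lemma eigenvectorBasis_ne_zero (i : ι) : ⇑(hM.eigenvectorBasis i) ≠ 0 := fun h =>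
  hM.eigenvectorBasis.orthonormal.ne_zero i (by ext j; exact congrFun h j)

lemma posSemidef_sub_lambdaMin_smul_one : (M - lambdaMin M • (1 : Matrix ι ι ℝ)).PosSemidef := by
  have hM' : (M - lambdaMin M • (1 : Matrix ι ι ℝ)).IsHermitian :=
    hM.sub (by simp [Matrix.IsHermitian])
  refine hM'.posSemidef_iff_eigenvalues_nonneg.mpr fun i => show 0 ≤ _ from ?_
  have hw := hM'.mulVec_eigenvectorBasis i
  rw [sub_mulVec, smul_mulVec, one_mulVec, sub_eq_iff_eq_add, ← add_smul] at hw
  linarith [lambdaMin_le_of_mulVec_eq (hM'.eigenvectorBasis_ne_zero i) hw]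

lemma lambdaMin_mul_dotProduct_self_le (y : ι → ℝ) :
    lambdaMin M * (y ⬝ᵥ y) ≤ y ⬝ᵥ M *ᵥ y := by
  have h := hM.posSemidef_sub_lambdaMin_smul_one.dotProduct_mulVec_nonneg y
  rw [star_trivial, sub_mulVec, smul_mulVec, one_mulVec, dotProduct_sub, dotProduct_smul,
    smul_eq_mul] at h
  linarith

lemma le_lambdaMin [Nonempty ι] {μ : ℝ} (h : ∀ y, μ * (y ⬝ᵥ y) ≤ y ⬝ᵥ M *ᵥ y) :
    μ ≤ lambdaMin M := by
  obtain ⟨i⟩ := ‹Nonempty ι›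
  refine le_csInf ⟨_, _, hM.eigenvectorBasis_ne_zero i, hM.mulVec_eigenvectorBasis i⟩ ?_
  rintro μ' ⟨v, hv, hMv⟩
  have hμ := h v
  rw [hMv, dotProduct_smul, smul_eq_mul] at hμ
  exact le_of_mul_le_mul_right hμ (dotProduct_self_pos hv)

end Matrix.IsHermitian

end LambdaMin

lemma homogenized_nonneg {ι : Type} [Fintype ι] {B : Matrix ι ι ℝ} {d : ι → ℝ} {γ : ℝ}
    (h : ∀ y, 0 ≤ y ⬝ᵥ B *ᵥ y - 2 * (d ⬝ᵥ y) + γ) (s : ℝ) (x : ι → ℝ) :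
    0 ≤ x ⬝ᵥ B *ᵥ x - 2 * s * (d ⬝ᵥ x) + γ * s ^ 2 := by
  have hne : ∀ s ≠ 0, 0 ≤ x ⬝ᵥ B *ᵥ x - 2 * s * (d ⬝ᵥ x) + γ * s ^ 2 := fun s hs => by
    have := mul_nonneg (sq_nonneg s) (h (s⁻¹ • x))
    simp only [mulVec_smul, dotProduct_smul, smul_dotProduct, smul_eq_mul] at this
    have e : x ⬝ᵥ B *ᵥ x - 2 * s * (d ⬝ᵥ x) + γ * s ^ 2
        = s ^ 2 * (s⁻¹ * (s⁻¹ * (x ⬝ᵥ B *ᵥ x)) - 2 * (s⁻¹ * (d ⬝ᵥ x)) + γ) := by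
      field_simp
    exact e ▸ this
  rcases eq_or_ne s 0 with rfl | hs
  · -- at `s = 0` the bound survives as a limit of the bounds at `s ≠ 0`
    have hcont : Continuous fun s : ℝ => x ⬝ᵥ B *ᵥ x - 2 * s * (d ⬝ᵥ x) + γ * s ^ 2 := by
      fun_prop
    exact ge_of_tendsto (hcont.tendsto 0 |>.mono_left nhdsWithin_le_nhds)
      (eventually_nhdsWithin_of_forall (s := {0}ᶜ) hne)
  · exact hne s hs

section BorderedMatrix

variable {n : ℕ} (A : Matrix (Fin n) (Fin n) ℝ)

lemma borderD_isHermitian (hA : A.IsHermitian) (d : Fin n → ℝ) (t : ℝ) :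
    (borderD A d t).IsHermitian :=
  IsHermitian.fromBlocks (by ext; simp) (by ext; simp) hA

lemma sumElim_dotProduct_borderD_mulVec (d : Fin n → ℝ) (t s : ℝ) (x : Fin n → ℝ) :
    Sum.elim (fun _ => s) x ⬝ᵥ borderD A d t *ᵥ Sum.elim (fun _ => s) x
      = x ⬝ᵥ A *ᵥ x - 2 * s * (d ⬝ᵥ x) + t * s ^ 2 := by
  simp only [borderD, fromBlocks_mulVec, sumElim_dotProduct_sumElim, dotProduct_add]
  simp [dotProduct, mulVec, ← Finset.mul_sum, mul_comm, mul_left_comm]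
  ring

lemma sumElim_dotProduct_self (s : ℝ) (x : Fin n → ℝ) :
    Sum.elim (fun _ : Unit => s) x ⬝ᵥ Sum.elim (fun _ => s) x = s ^ 2 + x ⬝ᵥ x := by
  simp [dotProduct, sq]

lemma borderD2_eq (a b : Fin n → ℝ) (t l : ℝ) :
    borderD2 A a b t l = borderD A (a - (l / 2) • b) t := rfl

end BorderedMatrix

section Duality

variable {n : ℕ} (A : Matrix (Fin n) (Fin n) ℝ) (a b : Fin n → ℝ) (c Δ : ℝ)

lemma lagr_eq (x : Fin n → ℝ) (l1 l2 : ℝ) :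
    lagr A a b c Δ x l1 l2
      = x ⬝ᵥ A *ᵥ x + l1 * (x ⬝ᵥ x) - 2 * ((a - (l2 / 2) • b) ⬝ᵥ x) - l1 * Δ - l2 * c := by
  simp only [lagr, objQ, sub_dotProduct, smul_dotProduct, smul_eq_mul]
  ring

variable {A}

lemma ktl_le_lagr (hA : A.IsHermitian) (t l : ℝ) (x : Fin n → ℝ) :
    ktl A a b c Δ t l ≤ lagr A a b c Δ x (-lambdaMin (borderD2 A a b t l)) l := by
  have h := (borderD_isHermitian A hA (a - (l / 2) • b) t).lambdaMin_mul_dotProduct_self_le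
    (Sum.elim (fun _ => 1) x)
  rw [sumElim_dotProduct_borderD_mulVec, sumElim_dotProduct_self, ← borderD2_eq] at h
  rw [ktl, lagr_eq]
  linarith

lemma le_ktl_of_le_lagr (hA : A.IsHermitian) (hΔ : 0 ≤ Δ + 1) {v l1 l2 : ℝ}
    (hv : ∀ x, v ≤ lagr A a b c Δ x l1 l2) :
    v ≤ ktl A a b c Δ (-v - l1 * (Δ + 1) - l2 * c) l2 := by
  -- chosen so that `ktl A a b c Δ t l2 = v + (Δ + 1) * (lambdaMin (borderD2 A a b t l2) + l1)`
  set t := -v - l1 * (Δ + 1) - l2 * c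
  have hform : ∀ y, 0 ≤ y ⬝ᵥ (A + l1 • 1) *ᵥ y - 2 * ((a - (l2 / 2) • b) ⬝ᵥ y) + (t + l1) := by
    intro y
    have := hv y
    rw [lagr_eq] at this
    simp only [add_mulVec, smul_mulVec, one_mulVec, dotProduct_add, dotProduct_smul, smul_eq_mul]
    linarith
  have hD : -l1 ≤ lambdaMin (borderD2 A a b t l2) := by
    rw [borderD2_eq]
    refine (borderD_isHermitian A hA _ t).le_lambdaMin fun w => ?_
    obtain ⟨s, x, rfl⟩ : ∃ s x, w = Sum.elim (fun _ => s) x :=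
      ⟨w (Sum.inl ()), fun j => w (Sum.inr j), by ext (_ | j) <;> rfl⟩
    have := homogenized_nonneg hform s x
    simp only [add_mulVec, smul_mulVec, one_mulVec, dotProduct_add, dotProduct_smul,
      smul_eq_mul] at this
    rw [sumElim_dotProduct_borderD_mulVec, sumElim_dotProduct_self]
    linarith
  rw [ktl]
  nlinarith [mul_le_mul_of_nonneg_left hD hΔ]

lemma dstar_eq_ktl (hA : A.IsHermitian) (hΔ : 0 ≤ Δ + 1) {ts ls : ℝ} (hls : 0 ≤ ls)
    (hmax : ∀ t l : ℝ, 0 ≤ l → ktl A a b c Δ t l ≤ ktl A a b c Δ ts ls)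
    (hD : lambdaMin (borderD2 A a b ts ls) ≤ 0) :
    dstar A a b c Δ = ktl A a b c Δ ts ls := by
  refine IsGreatest.csSup_eq ⟨⟨_, ls, neg_nonneg.mpr hD, hls, ktl_le_lagr a b c Δ hA ts ls⟩, ?_⟩
  rintro v ⟨l1, l2, -, hl2, hv⟩
  exact (le_ktl_of_le_lagr a b c Δ hA hΔ hv).trans (hmax _ _ hl2)

end Duality

section Primal

variable {n : ℕ} (A : Matrix (Fin n) (Fin n) ℝ) (a b : Fin n → ℝ) (c Δ : ℝ)

lemma isCompact_feasibleSet : IsCompact {x : Fin n → ℝ | x ⬝ᵥ x ≤ Δ ∧ b ⬝ᵥ x ≤ c} := by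
  refine Metric.isCompact_of_isClosed_isBounded ?_ ?_
  · exact (isClosed_le (continuous_id.dotProduct continuous_id) continuous_const).inter
      (isClosed_le (continuous_const.dotProduct continuous_id) continuous_const)
  · refine (Metric.isBounded_iff_subset_closedBall 0).mpr ⟨√Δ, fun x hx => ?_⟩
    rw [mem_closedBall_zero_iff, pi_norm_le_iff_of_nonneg (Real.sqrt_nonneg _)]
    intro i
    rw [Real.norm_eq_abs]
    refine Real.abs_le_sqrt (le_trans ?_ hx.1)
    rw [sq, dotProduct]
    exact Finset.single_le_sum (f := fun j => x j * x j) (fun j _ => mul_self_nonneg _)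
      (Finset.mem_univ i)

lemma exists_isOptimal (h : ∃ x : Fin n → ℝ, x ⬝ᵥ x ≤ Δ ∧ b ⬝ᵥ x ≤ c) :
    ∃ x, isOptimal A a b c Δ x := by
  obtain ⟨x, ⟨hxΔ, hxc⟩, hmin⟩ :=
    (isCompact_feasibleSet b c Δ).exists_isMinOn h (f := objQ A a) (by unfold objQ; fun_prop)
  exact ⟨x, hxΔ, hxc, fun y hyΔ hyc => hmin ⟨hyΔ, hyc⟩⟩

variable {A a b c Δ}

lemma pstar_eq_objQ {x : Fin n → ℝ} (hx : isOptimal A a b c Δ x) :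
    pstar A a b c Δ = objQ A a x :=
  IsLeast.csInf_eq ⟨⟨x, hx.1, hx.2.1, rfl⟩, by rintro _ ⟨y, hyΔ, hyc, rfl⟩; exact hx.2.2 y hyΔ hyc⟩

lemma complementary_slackness {x : Fin n → ℝ} {v l1 l2 : ℝ} (hl1 : 0 < l1) (hl2 : 0 < l2)
    (hxΔ : x ⬝ᵥ x ≤ Δ) (hxc : b ⬝ᵥ x ≤ c) (hv : ∀ y, v ≤ lagr A a b c Δ y l1 l2)
    (hx : objQ A a x ≤ v) :
    x ⬝ᵥ x = Δ ∧ b ⬝ᵥ x = c ∧ ∀ y, lagr A a b c Δ x l1 l2 ≤ lagr A a b c Δ y l1 l2 := by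
  have h1 := mul_nonpos_of_nonneg_of_nonpos hl1.le (sub_nonpos.mpr hxΔ)
  have h2 := mul_nonpos_of_nonneg_of_nonpos hl2.le (sub_nonpos.mpr hxc)
  have hvx := hv x
  rw [lagr] at hvx
  have e1 : l1 * (x ⬝ᵥ x - Δ) = 0 := by linarith
  have e2 : l2 * (b ⬝ᵥ x - c) = 0 := by linarith
  refine ⟨by simpa [hl1.ne', sub_eq_zero] using e1, by simpa [hl2.ne', sub_eq_zero] using e2,
    fun y => le_trans ?_ (hv y)⟩
  rw [lagr, e1, e2]
  linarith

end Primal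

section ShiftedMatrix

variable {n : ℕ} {A : Matrix (Fin n) (Fin n) ℝ} {a b : Fin n → ℝ} {c Δ μ l : ℝ}
  {x₀ : Fin n → ℝ}

lemma lagr_sub_lagr (hM : (A - μ • 1).IsHermitian)
    (hx₀ : (A - μ • 1) *ᵥ x₀ = a - (l / 2) • b) (x : Fin n → ℝ) :
    lagr A a b c Δ x (-μ) l - lagr A a b c Δ x₀ (-μ) l
      = (x - x₀) ⬝ᵥ (A - μ • 1) *ᵥ (x - x₀) := by
  have hlagr : ∀ y, lagr A a b c Δ y (-μ) l
      = y ⬝ᵥ (A - μ • 1) *ᵥ y - 2 * ((a - (l / 2) • b) ⬝ᵥ y) + μ * Δ - l * c := fun y => by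
    rw [lagr_eq, sub_mulVec, smul_mulVec, one_mulVec, dotProduct_sub, dotProduct_smul, smul_eq_mul]
    ring
  have hsymm : x₀ ⬝ᵥ (A - μ • 1) *ᵥ x = x ⬝ᵥ (A - μ • 1) *ᵥ x₀ := by
    rw [dotProduct_mulVec, ← mulVec_transpose, ← conjTranspose_eq_transpose_of_trivial, hM.eq,
      dotProduct_comm]
  have hexp : (x - x₀) ⬝ᵥ (A - μ • 1) *ᵥ (x - x₀)
      = x ⬝ᵥ (A - μ • 1) *ᵥ x - 2 * (x ⬝ᵥ (A - μ • 1) *ᵥ x₀) + x₀ ⬝ᵥ (A - μ • 1) *ᵥ x₀ := by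
    rw [mulVec_sub, dotProduct_sub, sub_dotProduct, sub_dotProduct, hsymm]
    ring
  rw [hexp, hlagr, hlagr, hx₀, dotProduct_comm _ x, dotProduct_comm _ x₀]
  ring

lemma mulVec_sub_eq_zero_of_forall_lagr_le (hM : (A - μ • 1).PosSemidef)
    (hx₀ : (A - μ • 1) *ᵥ x₀ = a - (l / 2) • b) {x : Fin n → ℝ}
    (hx : ∀ y, lagr A a b c Δ x (-μ) l ≤ lagr A a b c Δ y (-μ) l) :
    (A - μ • 1) *ᵥ (x - x₀) = 0 := by
  rw [← hM.dotProduct_mulVec_zero_iff, star_trivial]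
  have := lagr_sub_lagr (c := c) (Δ := Δ) hM.isHermitian hx₀ x
  have := hM.dotProduct_mulVec_nonneg (x - x₀)
  rw [star_trivial] at this
  linarith [hx x₀]

end ShiftedMatrix

lemma exists_eq_smul_of_eigMult_eq_one {ι : Type} [Fintype ι] [DecidableEq ι]
    {M : Matrix ι ι ℝ} (h : eigMult M = 1) {v u : ι → ℝ} (hv0 : v ≠ 0)
    (hv : (M - lambdaMin M • 1) *ᵥ v = 0) (hu : (M - lambdaMin M • 1) *ᵥ u = 0) :
    ∃ s : ℝ, u = s • v := by
  have mem_ker : ∀ w, (M - lambdaMin M • 1) *ᵥ w = 0 →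
      w ∈ LinearMap.ker (M - lambdaMin M • 1).mulVecLin := fun w hw => by
    rwa [LinearMap.mem_ker, mulVecLin_apply]
  have hker := eq_span_singleton_of_mem_of_finrank_eq_one h (mem_ker v hv) hv0
  obtain ⟨s, rfl⟩ := Submodule.mem_span_singleton.mp (hker ▸ mem_ker u hu)
  exact ⟨s, rfl⟩

lemma eq_or_eq_of_dotProduct_self_eq {ι : Type} [Fintype ι] {x x₁ x₂ : ι → ℝ} {s : ℝ}
    (hx : x = x₁ + s • (x₂ - x₁)) (h : x ⬝ᵥ x = x₁ ⬝ᵥ x₁) (h₂ : x₂ ⬝ᵥ x₂ = x₁ ⬝ᵥ x₁) :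
    x = x₁ ∨ x = x₂ := by
  set v := x₂ - x₁
  have hx₂ : x₂ = x₁ + v := by simp [v]
  have expand : ∀ r : ℝ, (x₁ + r • v) ⬝ᵥ (x₁ + r • v)
      = x₁ ⬝ᵥ x₁ + 2 * r * (x₁ ⬝ᵥ v) + r ^ 2 * (v ⬝ᵥ v) := fun r => by
    simp only [add_dotProduct, dotProduct_add, smul_dotProduct, dotProduct_smul, smul_eq_mul,
      dotProduct_comm v x₁]
    ring
  have hroot : s * (s - 1) * (v ⬝ᵥ v) = 0 := by
    have h₂' := expand 1
    rw [one_smul, ← hx₂, h₂] at h₂'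
    rw [hx, expand] at h
    linear_combination h + s * h₂'
  rcases mul_eq_zero.mp hroot with hs | hv
  · rcases mul_eq_zero.mp hs with rfl | hs1
    · simp [hx]
    · right; rw [hx, sub_eq_zero.mp hs1, one_smul, ← hx₂]
  · left; rw [hx, dotProduct_self_eq_zero.mp hv, smul_zero, add_zero]

theorem stmt11_general {n : ℕ} (A : Matrix (Fin n) (Fin n) ℝ) (hA : A.IsHermitian)
    (a b : Fin n → ℝ) (c Δ : ℝ) (ts ls : ℝ)
    (hmax : ∀ t l : ℝ, 0 ≤ l → ktl A a b c Δ t l ≤ ktl A a b c Δ ts ls)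
    (heq : lambdaMin (borderD2 A a b ts ls) = lambdaMin A)
    (hneg : lambdaMin A < 0) (hsimple : eigMult A = 1) (hls0 : 0 < ls)
    (x1 x2 : Fin n → ℝ)
    (hx1 : (A - lambdaMin A • (1 : Matrix (Fin n) (Fin n) ℝ)).mulVec x1 = a - (ls / 2) • b)
    (hx2 : (A - lambdaMin A • (1 : Matrix (Fin n) (Fin n) ℝ)).mulVec x2 = a - (ls / 2) • b)
    (hn1 : x1 ⬝ᵥ x1 = Δ) (hn2 : x2 ⬝ᵥ x2 = Δ)
    (hprod : (b ⬝ᵥ x1 - c) * (b ⬝ᵥ x2 - c) < 0) :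
    pstar A a b c Δ ≠ dstar A a b c Δ := by
  have hΔ : 0 ≤ Δ + 1 := by linarith [hn1 ▸ dotProduct_self_star_nonneg x1]
  have hx12 : x1 ≠ x2 := by rintro rfl; nlinarith [mul_self_nonneg (b ⬝ᵥ x1 - c)]
  have hfeas : ∃ x : Fin n → ℝ, x ⬝ᵥ x ≤ Δ ∧ b ⬝ᵥ x ≤ c := by
    rcases mul_neg_iff.mp hprod with h | h
    exacts [⟨x2, hn2.le, by linarith [h.2]⟩, ⟨x1, hn1.le, by linarith [h.1]⟩]
  obtain ⟨xs, hxs⟩ := exists_isOptimal A a b c Δ hfeas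
  rw [pstar_eq_objQ hxs, dstar_eq_ktl a b c Δ hA hΔ hls0.le hmax (heq.trans_le hneg.le)]
  intro hgap
  obtain ⟨hxsΔ, hxsc, hxsmin⟩ := complementary_slackness (neg_pos.mpr hneg) hls0 hxs.1 hxs.2.1
    (fun y => heq ▸ ktl_le_lagr a b c Δ hA ts ls y) hgap.le
  have hker :=
    mulVec_sub_eq_zero_of_forall_lagr_le hA.posSemidef_sub_lambdaMin_smul_one hx1 hxsmin
  obtain ⟨s, hs⟩ := exists_eq_smul_of_eigMult_eq_one hsimple (sub_ne_zero.mpr hx12.symm)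
    (by rw [mulVec_sub, hx1, hx2, sub_self]) hker
  rcases eq_or_eq_of_dotProduct_self_eq (by rw [← hs]; abel) (hxsΔ.trans hn1.symm)
    (hn2.trans hn1.symm) with rfl | rfl <;> simp [hxsc] at hprod

/-- Theorem 4, item 2.1. -/
theorem stmt11 {n : ℕ} (hn : 1 ≤ n) (A : Matrix (Fin n) (Fin n) ℝ) (hA : A.IsHermitian)
    (hnpd : ¬ A.PosDef) (a b : Fin n → ℝ) (c Δ : ℝ) (hΔ : 0 < Δ)
    (hslater : ∃ x : Fin n → ℝ, x ⬝ᵥ x < Δ ∧ b ⬝ᵥ x < c)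
    (ts ls : ℝ) (hls : 0 ≤ ls)
    (hmax : ∀ t l : ℝ, 0 ≤ l → ktl A a b c Δ t l ≤ ktl A a b c Δ ts ls)
    (heq : lambdaMin (borderD2 A a b ts ls) = lambdaMin A)
    (hneg : lambdaMin A < 0) (hsimple : eigMult A = 1) (hls0 : 0 < ls)
    (x1 x2 : Fin n → ℝ)
    (hx1 : (A - lambdaMin A • (1 : Matrix (Fin n) (Fin n) ℝ)).mulVec x1 = a - (ls / 2) • b)
    (hx2 : (A - lambdaMin A • (1 : Matrix (Fin n) (Fin n) ℝ)).mulVec x2 = a - (ls / 2) • b)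
    (hn1 : x1 ⬝ᵥ x1 = Δ) (hn2 : x2 ⬝ᵥ x2 = Δ)
    (hprod : (b ⬝ᵥ x1 - c) * (b ⬝ᵥ x2 - c) < 0) :
    pstar A a b c Δ ≠ dstar A a b c Δ :=
  stmt11_general A hA a b c Δ ts ls hmax heq hneg hsimple hls0 x1 x2 hx1 hx2 hn1 hn2 hprod
end

section
/- (Lemma 2, deflation) Suppose λmin(A) has multiplicity i > 2. Let λ1* := −λmin(A) ≥ 0 and λ2* ≥ 0 be the optimal Lagrange multipliers of eTRS (i.e., (λ1*, λ2*) attains the supremum defining d*), and let u* := (A + λ1*·I)†(a − (λ2*/2)b) with ‖u*‖² < Δ, where † is the Moore–Penrose pseudoinverse. Let v be a unit-norm eigenvector of A for λmin(A) with bᵀv = 0, and let α > 0. Then eTRS has a global optimal solution of the form u* + z with z ∈ Null(A + λ1*·I) if and only if the modified problem, obtained from eTRS by replacing A with A + α·v·vᵀ, has a global optimal solution of the form u* + z with z ∈ Null(A + α·v·vᵀ + λ1*·I). -/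
/-! If the `λmin`-eigenspace has dimension at least three, it contains a unit vector `w` orthogonal
to `v` and to `b`; it is then also orthogonal to `a`, because `a - (λ₂/2) b` lies in the range of
the symmetric matrix `A - λmin I`. Rotating any point `y` inside the plane spanned by `v` and `w`
changes neither `‖y‖`, nor `bᵀy`, nor the objective, and can make `y` orthogonal to `v`. On such
points the deflated objective `xᵀ(A + α vvᵀ)x - 2aᵀx = xᵀAx - 2aᵀx + α (vᵀx)²` agrees with the
original one and it dominates the original one everywhere, so the two problems share their
optimal solutions orthogonal to `v`, and every optimal solution of the form `u + z` can be rotated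
into one of them. -/

open Matrix

section DotProduct

variable {ι : Type*} [Fintype ι]

theorem Matrix.IsSymm.dotProduct_mulVec_comm {N : Matrix ι ι ℝ} (hN : N.IsSymm) (x y : ι → ℝ) :
    x ⬝ᵥ N *ᵥ y = y ⬝ᵥ N *ᵥ x := by
  rw [← dotProduct_transpose_mulVec, hN.eq]

theorem Matrix.IsSymm.dotProduct_eq_zero_of_mulVec_eq_sub_smul {N : Matrix ι ι ℝ}
    (hN : N.IsSymm) {u a b q : ι → ℝ} {κ : ℝ} (hu : N *ᵥ u = a - κ • b) (hq : N *ᵥ q = 0)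
    (hbq : b ⬝ᵥ q = 0) : a ⬝ᵥ q = 0 := by
  have h : q ⬝ᵥ N *ᵥ u = 0 := by rw [hN.dotProduct_mulVec_comm, hq, dotProduct_zero]
  rwa [hu, dotProduct_sub, dotProduct_smul, dotProduct_comm q b, hbq, smul_zero, sub_zero,
    dotProduct_comm] at h

theorem exists_mem_dotProduct_eq_zero_of_two_lt_finrank (K : Submodule ℝ (ι → ℝ))
    (hK : 2 < Module.finrank ℝ K) (v b : ι → ℝ) :
    ∃ w ∈ K, v ⬝ᵥ w = 0 ∧ b ⬝ᵥ w = 0 ∧ w ⬝ᵥ w = 1 := by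
  let g : K →ₗ[ℝ] ℝ × ℝ := (dotProductBilin ℝ ℝ v).prod (dotProductBilin ℝ ℝ b) ∘ₗ K.subtype
  have hg : ¬ Function.Injective g := fun hinj => by
    have := LinearMap.finrank_le_finrank_of_injective hinj
    rw [Module.finrank_prod, Module.finrank_self] at this
    omega
  rw [← LinearMap.ker_eq_bot] at hg
  obtain ⟨⟨w, hwK⟩, hgw, hw0⟩ := Submodule.exists_mem_ne_zero_of_ne_bot hg
  have hw : w ≠ 0 := fun h => hw0 (Subtype.ext h)
  have hpos : 0 < w ⬝ᵥ w :=
    lt_of_le_of_ne (Finset.sum_nonneg fun i _ => mul_self_nonneg (w i))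
      (Ne.symm (dotProduct_self_eq_zero.not.mpr hw))
  refine ⟨(√(w ⬝ᵥ w))⁻¹ • w, K.smul_mem _ hwK, ?_, ?_, ?_⟩
  · rw [dotProduct_smul, show v ⬝ᵥ w = 0 from congrArg Prod.fst hgw, smul_zero]
  · rw [dotProduct_smul, show b ⬝ᵥ w = 0 from congrArg Prod.snd hgw, smul_zero]
  · rw [dotProduct_smul, smul_dotProduct, smul_smul, smul_eq_mul, ← mul_inv,
      Real.mul_self_sqrt hpos.le, inv_mul_cancel₀ hpos.ne']

theorem exists_rotation_dotProduct_eq_zero {v w : ι → ℝ} (hv : v ⬝ᵥ v = 1) (hw : w ⬝ᵥ w = 1)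
    (hvw : v ⬝ᵥ w = 0) (y : ι → ℝ) :
    ∃ s t : ℝ, v ⬝ᵥ (y + (s • v + t • w)) = 0 ∧
      (y + (s • v + t • w)) ⬝ᵥ (y + (s • v + t • w)) = y ⬝ᵥ y := by
  set p := v ⬝ᵥ y
  set q := w ⬝ᵥ y
  -- the `(v, w)`-coordinates `(p, q)` of `y` are moved to `(0, √(p² + q²))`
  have hr : √(p ^ 2 + q ^ 2) ^ 2 = p ^ 2 + q ^ 2 := Real.sq_sqrt (by positivity)
  have hwv : w ⬝ᵥ v = 0 := by rw [dotProduct_comm, hvw]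
  refine ⟨-p, √(p ^ 2 + q ^ 2) - q, ?_, ?_⟩
  · simp only [dotProduct_add, dotProduct_smul, smul_eq_mul, hv, hvw]
    ring
  · simp only [dotProduct_add, add_dotProduct, dotProduct_smul, smul_dotProduct, smul_eq_mul, hv,
      hw, hvw, hwv, dotProduct_comm y v, dotProduct_comm y w]
    linear_combination hr

end DotProduct

section Deflation

variable {n : ℕ} {A : Matrix (Fin n) (Fin n) ℝ} {a b v : Fin n → ℝ} {c Δ : ℝ}

theorem objQ_add_smul_vecMulVec (A : Matrix (Fin n) (Fin n) ℝ) (a v : Fin n → ℝ) (α : ℝ)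
    (x : Fin n → ℝ) :
    objQ (A + α • vecMulVec v v) a x = objQ A a x + α * (v ⬝ᵥ x) ^ 2 := by
  simp only [objQ, add_mulVec, smul_mulVec, vecMulVec_mulVec, op_smul_eq_smul, dotProduct_add,
    dotProduct_smul, smul_eq_mul, dotProduct_comm x v]
  ring

theorem objQ_sub_smul_one (A : Matrix (Fin n) (Fin n) ℝ) (a : Fin n → ℝ) (μ : ℝ)
    (x : Fin n → ℝ) : objQ (A - μ • 1) a x = objQ A a x - μ * (x ⬝ᵥ x) := by
  simp only [objQ, sub_mulVec, smul_mulVec, one_mulVec, dotProduct_sub, dotProduct_smul,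
    smul_eq_mul]
  ring

theorem objQ_add_of_mulVec_eq_zero {N : Matrix (Fin n) (Fin n) ℝ} (hN : N.IsSymm)
    {e : Fin n → ℝ} (he : N *ᵥ e = 0) (hae : a ⬝ᵥ e = 0) (y : Fin n → ℝ) :
    objQ N a (y + e) = objQ N a y := by
  simp only [objQ, mulVec_add, he, add_zero, add_dotProduct, hN.dotProduct_mulVec_comm e y,
    dotProduct_zero, dotProduct_add, hae]

theorem mulVec_add_smul_vecMulVec_eq_zero_iff {N : Matrix (Fin n) (Fin n) ℝ} (hN : N.IsSymm)
    (hNv : N *ᵥ v = 0) (hv : v ≠ 0) {α : ℝ} (hα : α ≠ 0) (z : Fin n → ℝ) :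
    (N + α • vecMulVec v v) *ᵥ z = 0 ↔ N *ᵥ z = 0 ∧ v ⬝ᵥ z = 0 := by
  have hmul : (N + α • vecMulVec v v) *ᵥ z = N *ᵥ z + (α * (v ⬝ᵥ z)) • v := by
    rw [add_mulVec, smul_mulVec, vecMulVec_mulVec, op_smul_eq_smul, smul_smul]
  refine ⟨fun hz => ?_, fun ⟨hNz, hvz⟩ => by rw [hmul, hNz, hvz, mul_zero, zero_smul, add_zero]⟩
  have hvz : v ⬝ᵥ z = 0 := by
    have h := congrArg (v ⬝ᵥ ·) hz
    simp only [hmul, dotProduct_add, hN.dotProduct_mulVec_comm v z, hNv, dotProduct_zero,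
      dotProduct_smul, smul_eq_mul, zero_add] at h
    simpa [hα, hv] using h
  rw [hmul, hvz, mul_zero, zero_smul, add_zero] at hz
  exact ⟨hz, hvz⟩

theorem exists_eigenspace_rotation {μ : ℝ} (hA : A.IsSymm) {w : Fin n → ℝ}
    (hv : (A - μ • 1) *ᵥ v = 0) (hw : (A - μ • 1) *ᵥ w = 0) (hv1 : v ⬝ᵥ v = 1)
    (hw1 : w ⬝ᵥ w = 1) (hvw : v ⬝ᵥ w = 0) (hav : a ⬝ᵥ v = 0) (haw : a ⬝ᵥ w = 0)
    (hbv : b ⬝ᵥ v = 0) (hbw : b ⬝ᵥ w = 0) (y : Fin n → ℝ) :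
    ∃ e, (A - μ • 1) *ᵥ e = 0 ∧ v ⬝ᵥ (y + e) = 0 ∧ (y + e) ⬝ᵥ (y + e) = y ⬝ᵥ y ∧
      b ⬝ᵥ (y + e) = b ⬝ᵥ y ∧ objQ A a (y + e) = objQ A a y := by
  obtain ⟨s, t, hvy, hnorm⟩ := exists_rotation_dotProduct_eq_zero hv1 hw1 hvw y
  have he : (A - μ • 1) *ᵥ (s • v + t • w) = 0 := by
    rw [mulVec_add, mulVec_smul, mulVec_smul, hv, hw, smul_zero, smul_zero, add_zero]
  have hae : a ⬝ᵥ (s • v + t • w) = 0 := by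
    rw [dotProduct_add, dotProduct_smul, dotProduct_smul, hav, haw, smul_zero, smul_zero, add_zero]
  refine ⟨s • v + t • w, he, hvy, hnorm, ?_, ?_⟩
  · rw [dotProduct_add, dotProduct_add, dotProduct_smul, dotProduct_smul, hbv, hbw, smul_zero,
      smul_zero, add_zero, add_zero]
  · have h := objQ_add_of_mulVec_eq_zero (hA.sub (isSymm_one.smul μ)) he hae y
    rwa [objQ_sub_smul_one, objQ_sub_smul_one, hnorm, sub_left_inj] at h

theorem isOptimal.of_objQ_eq {x y : Fin n → ℝ} (hx : isOptimal A a b c Δ x)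
    (hnorm : y ⬝ᵥ y = x ⬝ᵥ x) (hb : b ⬝ᵥ y = b ⬝ᵥ x) (hobj : objQ A a y = objQ A a x) :
    isOptimal A a b c Δ y :=
  ⟨hnorm ▸ hx.1, hb ▸ hx.2.1, hobj ▸ hx.2.2⟩

theorem isOptimal.add_smul_vecMulVec {α : ℝ} (hα : 0 ≤ α) {x : Fin n → ℝ}
    (hx : isOptimal A a b c Δ x) (hvx : v ⬝ᵥ x = 0) :
    isOptimal (A + α • vecMulVec v v) a b c Δ x := by
  refine ⟨hx.1, hx.2.1, fun y hy hby => ?_⟩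
  rw [objQ_add_smul_vecMulVec, objQ_add_smul_vecMulVec, hvx]
  nlinarith [hx.2.2 y hy hby, mul_nonneg hα (sq_nonneg (v ⬝ᵥ y))]

theorem isOptimal.of_add_smul_vecMulVec {α : ℝ} {x : Fin n → ℝ}
    (hx : isOptimal (A + α • vecMulVec v v) a b c Δ x) (hvx : v ⬝ᵥ x = 0)
    (hrot : ∀ y, ∃ y', v ⬝ᵥ y' = 0 ∧ y' ⬝ᵥ y' = y ⬝ᵥ y ∧ b ⬝ᵥ y' = b ⬝ᵥ y ∧
      objQ A a y' = objQ A a y) :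
    isOptimal A a b c Δ x := by
  refine ⟨hx.1, hx.2.1, fun y hy hby => ?_⟩
  obtain ⟨y', hvy', hnorm, hb, hobj⟩ := hrot y
  have h := hx.2.2 y' (hnorm ▸ hy) (hb ▸ hby)
  rwa [objQ_add_smul_vecMulVec, objQ_add_smul_vecMulVec, hvx, hvy', hobj,
    add_le_add_iff_right] at h

end Deflation

/-- Here `u` is the Moore–Penrose solution u* = (A + λ1*·I)†(a − (λ2*/2)b), characterized as the
solution of (A + λ1*·I)u = a − (λ2*/2)b orthogonal to Null(A + λ1*·I). -/
theorem stmt14_general {n : ℕ} (A : Matrix (Fin n) (Fin n) ℝ) (hA : A.IsHermitian)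
    (a b : Fin n → ℝ) (c Δ : ℝ)
    (hmult : 2 < eigMult A) (l2 : ℝ)
    (u : Fin n → ℝ)
    (hu : (A + (-lambdaMin A) • (1 : Matrix (Fin n) (Fin n) ℝ)).mulVec u = a - (l2 / 2) • b)
    (huorth : ∀ z : Fin n → ℝ,
      (A + (-lambdaMin A) • (1 : Matrix (Fin n) (Fin n) ℝ)).mulVec z = 0 → u ⬝ᵥ z = 0)
    (v : Fin n → ℝ) (hv : A.mulVec v = lambdaMin A • v) (hv1 : v ⬝ᵥ v = 1)
    (hvb : b ⬝ᵥ v = 0) (α : ℝ) (hα : 0 < α) :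
    (∃ z : Fin n → ℝ,
        (A + (-lambdaMin A) • (1 : Matrix (Fin n) (Fin n) ℝ)).mulVec z = 0 ∧
        isOptimal A a b c Δ (u + z)) ↔
    (∃ z : Fin n → ℝ,
        (A + α • Matrix.vecMulVec v v +
          (-lambdaMin A) • (1 : Matrix (Fin n) (Fin n) ℝ)).mulVec z = 0 ∧
        isOptimal (A + α • Matrix.vecMulVec v v) a b c Δ (u + z)) := by
  simp only [add_right_comm A (α • _), neg_smul, ← sub_eq_add_neg] at hu huorth ⊢
  set N := A - lambdaMin A • (1 : Matrix (Fin n) (Fin n) ℝ)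
  have hAs : A.IsSymm := isHermitian_iff_isSymm.mp hA
  have hN : N.IsSymm := hAs.sub (isSymm_one.smul _)
  have hNv : N *ᵥ v = 0 := by rw [sub_mulVec, smul_mulVec, one_mulVec, hv, sub_self]
  obtain ⟨w, hNw, hvw, hbw, hw1⟩ := exists_mem_dotProduct_eq_zero_of_two_lt_finrank _ hmult v b
  have hrot := exists_eigenspace_rotation (a := a) hAs hNv hNw hv1 hw1 hvw
    (hN.dotProduct_eq_zero_of_mulVec_eq_sub_smul hu hNv hvb)
    (hN.dotProduct_eq_zero_of_mulVec_eq_sub_smul hu hNw hbw) hvb hbw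
  have hker := mulVec_add_smul_vecMulVec_eq_zero_iff hN hNv (by rintro rfl; simp at hv1) hα.ne'
  constructor
  · rintro ⟨z, hNz, hopt⟩
    obtain ⟨e, hNe, hve, hnorm, hb, hobj⟩ := hrot (u + z)
    refine ⟨z + e, (hker _).2 ⟨?_, ?_⟩, ?_⟩
    · rw [mulVec_add, hNz, hNe, add_zero]
    · rwa [add_assoc, dotProduct_add, dotProduct_comm, huorth v hNv, zero_add] at hve
    · rw [← add_assoc]
      exact (hopt.of_objQ_eq hnorm hb hobj).add_smul_vecMulVec hα.le hve
  · rintro ⟨z, hz, hopt⟩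
    obtain ⟨hNz, hvz⟩ := (hker z).1 hz
    refine ⟨z, hNz, hopt.of_add_smul_vecMulVec ?_ fun y => ?_⟩
    · rw [dotProduct_add, dotProduct_comm, huorth v hNv, hvz, add_zero]
    · obtain ⟨e, -, h⟩ := hrot y
      exact ⟨y + e, h⟩

/-- Lemma 2 (deflation). Here u is the Moore–Penrose solution
u* = (A + λ1*·I)†(a − (λ2*/2)b), characterized as the solution of
(A + λ1*·I)u = a − (λ2*/2)b orthogonal to Null(A + λ1*·I). -/
theorem stmt14 {n : ℕ} (hn : 1 ≤ n) (A : Matrix (Fin n) (Fin n) ℝ) (hA : A.IsHermitian)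
    (hnpd : ¬ A.PosDef) (a b : Fin n → ℝ) (c Δ : ℝ) (hΔ : 0 < Δ)
    (hslater : ∃ x : Fin n → ℝ, x ⬝ᵥ x < Δ ∧ b ⬝ᵥ x < c)
    (hmult : 2 < eigMult A) (l2 : ℝ) (hl1 : 0 ≤ -lambdaMin A) (hl2 : 0 ≤ l2)
    (hattain : ∀ x : Fin n → ℝ, dstar A a b c Δ ≤ lagr A a b c Δ x (-lambdaMin A) l2)
    (u : Fin n → ℝ)
    (hu : (A + (-lambdaMin A) • (1 : Matrix (Fin n) (Fin n) ℝ)).mulVec u = a - (l2 / 2) • b)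
    (huorth : ∀ z : Fin n → ℝ,
      (A + (-lambdaMin A) • (1 : Matrix (Fin n) (Fin n) ℝ)).mulVec z = 0 → u ⬝ᵥ z = 0)
    (hunorm : u ⬝ᵥ u < Δ)
    (v : Fin n → ℝ) (hv : A.mulVec v = lambdaMin A • v) (hv1 : v ⬝ᵥ v = 1)
    (hvb : b ⬝ᵥ v = 0) (α : ℝ) (hα : 0 < α) :
    (∃ z : Fin n → ℝ,
        (A + (-lambdaMin A) • (1 : Matrix (Fin n) (Fin n) ℝ)).mulVec z = 0 ∧
        isOptimal A a b c Δ (u + z)) ↔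
    (∃ z : Fin n → ℝ,
        (A + α • Matrix.vecMulVec v v +
          (-lambdaMin A) • (1 : Matrix (Fin n) (Fin n) ℝ)).mulVec z = 0 ∧
        isOptimal (A + α • Matrix.vecMulVec v v) a b c Δ (u + z)) :=
  stmt14_general A hA a b c Δ hmult l2 u hu huorth v hv hv1 hvb α hα
end

section
/- (Proposition 2, Appendix) Suppose λmin(A) has multiplicity i > 2, and let λ1* := −λmin(A) ≥ 0 and λ2* ≥ 0 be optimal Lagrange multipliers of eTRS, i.e., (λ1*, λ2*) attains the supremum defining d*. Let v be a unit-norm eigenvector of A for λmin(A) with vᵀb = 0, and let α > 0. Then (λ1*, λ2*) also attains the supremum defining the Lagrangian dual value of the modified problem obtained from eTRS by replacing A with A + α·v·vᵀ. -/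
open Matrix

/-!
The rank-one term changes the Lagrangian only by `α (vᵀx)² ≥ 0`, so it suffices to show that
`A` and `A + α v vᵀ` have the same dual value; in fact, for fixed multipliers, the Lagrangians
have the same lower bounds. As the `λmin`-eigenspace has dimension at least two, it contains
`u ≠ 0` with `u ⊥ v`, on which both matrices act as `λmin`; a Lagrangian bounded below along
`ℝu` forces `λmin + λ₁ ≥ 0`. Attainment at `λ₁ = -λmin` makes the Lagrangian of `A` linear
along `ℝv`, hence `aᵀv = 0`, and then `L_A(x) = L_A(x - (vᵀx) v) + (λmin + λ₁)(vᵀx)²`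
where the first term equals the perturbed Lagrangian at `x - (vᵀx) v`.
-/

open Module

theorem Submodule.exists_ne_zero_dotProduct_eq_zero {𝕜 ι : Type*} [Field 𝕜] [Fintype ι]
    {K : Submodule 𝕜 (ι → 𝕜)} (hK : 1 < finrank 𝕜 K) (v : ι → 𝕜) :
    ∃ u ∈ K, u ≠ 0 ∧ v ⬝ᵥ u = 0 := by
  have hker : LinearMap.ker ((dotProductBilin 𝕜 𝕜 v).domRestrict K) ≠ ⊥ :=
    LinearMap.ker_ne_bot_of_finrank_lt (by rwa [finrank_self])
  obtain ⟨u, hu, hu0⟩ := Submodule.ne_bot_iff _ |>.mp hker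
  exact ⟨u, u.2, by simpa using hu0, hu⟩

theorem Matrix.exists_mulVec_eq_smul_dotProduct_eq_zero {𝕜 ι : Type*} [Field 𝕜] [Fintype ι]
    [DecidableEq ι] {A : Matrix ι ι 𝕜} {μ : 𝕜}
    (h : 1 < finrank 𝕜 (LinearMap.ker (A - μ • (1 : Matrix ι ι 𝕜)).mulVecLin)) (v : ι → 𝕜) :
    ∃ u, u ≠ 0 ∧ A *ᵥ u = μ • u ∧ v ⬝ᵥ u = 0 := by
  obtain ⟨u, hu, hu0, hvu⟩ := Submodule.exists_ne_zero_dotProduct_eq_zero h v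
  refine ⟨u, hu0, ?_, hvu⟩
  rwa [LinearMap.mem_ker, mulVecLin_apply, sub_mulVec, smul_mulVec, one_mulVec,
    sub_eq_zero] at hu

theorem eq_zero_of_forall_le_mul_add {e f w : ℝ} (h : ∀ s, w ≤ e * s + f) : e = 0 := by
  by_contra he
  have := h ((w - f - 1) / e)
  rw [mul_div_cancel₀ _ he] at this
  linarith

theorem nonneg_of_forall_le_mul_sq_add {p e f w : ℝ} (h : ∀ s, w ≤ p * s ^ 2 + e * s + f) :
    0 ≤ p := by
  by_contra! hp
  have hw (s : ℝ) : w ≤ p * s ^ 2 + f := by linarith [h s, h (-s)]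
  set s := 1 + |f - w| / -p
  have hs : 1 ≤ s := le_add_of_nonneg_right (div_nonneg (abs_nonneg _) (by linarith))
  have hps : p * s = p - |f - w| := by
    have : p * (|f - w| / -p) = -|f - w| := by rw [div_neg, mul_neg, mul_div_cancel₀ _ hp.ne]
    simp only [s, mul_add, this]; ring
  have : p * s ^ 2 ≤ p * s := by
    have := mul_le_mul_of_nonpos_left (show s ≤ s ^ 2 by nlinarith) hp.le; linarith
  linarith [hw s, le_abs_self (f - w)]

section Lagrangian

variable {n : ℕ} (A : Matrix (Fin n) (Fin n) ℝ) (a b : Fin n → ℝ) (c Δ : ℝ)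

theorem lagr_add_smul_vecMulVec_self (v : Fin n → ℝ) (α : ℝ) (x : Fin n → ℝ) (l1 l2 : ℝ) :
    lagr (A + α • vecMulVec v v) a b c Δ x l1 l2 = lagr A a b c Δ x l1 l2 + α * (v ⬝ᵥ x) ^ 2 := by
  simp only [lagr, objQ, add_mulVec, smul_mulVec, vecMulVec_mulVec, dotProduct_add,
    dotProduct_smul, smul_eq_mul, op_smul_eq_smul, dotProduct_comm x v]
  ring

theorem lagr_smul_of_mulVec_eq_smul {u : Fin n → ℝ} {μ : ℝ} (hu : A *ᵥ u = μ • u)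
    (s l1 l2 : ℝ) :
    lagr A a b c Δ (s • u) l1 l2 = (μ + l1) * (u ⬝ᵥ u) * s ^ 2
      + (l2 * (b ⬝ᵥ u) - 2 * (a ⬝ᵥ u)) * s - (l1 * Δ + l2 * c) := by
  simp only [lagr, objQ, mulVec_smul, hu, dotProduct_smul, smul_dotProduct, smul_eq_mul]
  ring

theorem lagr_eq_lagr_sub_add (hA : A.IsSymm) {v : Fin n → ℝ} {μ : ℝ} (hv : A *ᵥ v = μ • v)
    (hv1 : v ⬝ᵥ v = 1) (hvb : v ⬝ᵥ b = 0) (hav : a ⬝ᵥ v = 0) (x : Fin n → ℝ) (l1 l2 : ℝ) :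
    lagr A a b c Δ x l1 l2
      = lagr A a b c Δ (x - (v ⬝ᵥ x) • v) l1 l2 + (μ + l1) * (v ⬝ᵥ x) ^ 2 := by
  have hvA : v ⬝ᵥ A *ᵥ x = μ * (v ⬝ᵥ x) := by
    rw [dotProduct_mulVec, ← mulVec_transpose, hA.eq, hv, smul_dotProduct, smul_eq_mul]
  simp only [lagr, objQ, mulVec_sub, mulVec_smul, hv, sub_dotProduct, dotProduct_sub,
    dotProduct_smul, smul_dotProduct, smul_eq_mul, hvA, dotProduct_comm x v,
    dotProduct_comm b v, hvb, hv1, hav]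
  ring

theorem dotProduct_eq_zero_of_forall_le_lagr {v : Fin n → ℝ} {μ : ℝ} (hv : A *ᵥ v = μ • v)
    (hvb : v ⬝ᵥ b = 0) {w l2 : ℝ} (h : ∀ x, w ≤ lagr A a b c Δ x (-μ) l2) : a ⬝ᵥ v = 0 := by
  have := eq_zero_of_forall_le_mul_add (e := -2 * (a ⬝ᵥ v)) (f := μ * Δ - l2 * c) fun s => by
    convert h (s • v) using 1
    rw [lagr_smul_of_mulVec_eq_smul A a b c Δ hv, dotProduct_comm b v, hvb]
    ring
  linarith

theorem forall_le_lagr_add_smul_vecMulVec_iff (hA : A.IsSymm) {u v : Fin n → ℝ} {μ α : ℝ}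
    (hv : A *ᵥ v = μ • v) (hv1 : v ⬝ᵥ v = 1) (hvb : v ⬝ᵥ b = 0) (hav : a ⬝ᵥ v = 0)
    (hu0 : u ≠ 0) (hu : A *ᵥ u = μ • u) (hvu : v ⬝ᵥ u = 0) (hα : 0 ≤ α) (w l1 l2 : ℝ) :
    (∀ x, w ≤ lagr (A + α • vecMulVec v v) a b c Δ x l1 l2) ↔
      ∀ x, w ≤ lagr A a b c Δ x l1 l2 := by
  simp only [lagr_add_smul_vecMulVec_self]
  refine ⟨fun h x => ?_, fun h x => le_add_of_le_of_nonneg (h x) (by positivity)⟩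
  have hl1 : 0 ≤ μ + l1 := by
    have := nonneg_of_forall_le_mul_sq_add (p := (μ + l1) * (u ⬝ᵥ u))
      (e := l2 * (b ⬝ᵥ u) - 2 * (a ⬝ᵥ u)) (f := -(l1 * Δ + l2 * c)) fun s => by
        convert h (s • u) using 1
        rw [lagr_smul_of_mulVec_eq_smul A a b c Δ hu, dotProduct_smul, hvu]
        ring
    have huu : 0 < u ⬝ᵥ u := by simpa using dotProduct_star_self_pos_iff.mpr hu0
    exact nonneg_of_mul_nonneg_left this huu
  have hproj := h (x - (v ⬝ᵥ x) • v)
  rw [dotProduct_sub, dotProduct_smul, hv1, smul_eq_mul, mul_one, sub_self] at hproj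
  rw [lagr_eq_lagr_sub_add A a b c Δ hA hv hv1 hvb hav x]
  nlinarith [mul_nonneg hl1 (sq_nonneg (v ⬝ᵥ x))]

theorem dstar_add_smul_vecMulVec_eq (hA : A.IsSymm) {u v : Fin n → ℝ} {μ α : ℝ}
    (hv : A *ᵥ v = μ • v) (hv1 : v ⬝ᵥ v = 1) (hvb : v ⬝ᵥ b = 0) (hav : a ⬝ᵥ v = 0)
    (hu0 : u ≠ 0) (hu : A *ᵥ u = μ • u) (hvu : v ⬝ᵥ u = 0) (hα : 0 ≤ α) :
    dstar (A + α • vecMulVec v v) a b c Δ = dstar A a b c Δ := by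
  simp only [dstar, forall_le_lagr_add_smul_vecMulVec_iff A a b c Δ hA hv hv1 hvb hav hu0 hu hvu hα]

end Lagrangian

theorem stmt16_general {n : ℕ} (A : Matrix (Fin n) (Fin n) ℝ) (hA : A.IsHermitian)
    (a b : Fin n → ℝ) (c Δ : ℝ)
    (hmult : 2 < eigMult A) (l2 : ℝ)
    (hattain : ∀ x : Fin n → ℝ, dstar A a b c Δ ≤ lagr A a b c Δ x (-lambdaMin A) l2)
    (v : Fin n → ℝ) (hv : A.mulVec v = lambdaMin A • v) (hv1 : v ⬝ᵥ v = 1)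
    (hvb : v ⬝ᵥ b = 0) (α : ℝ) (hα : 0 < α) :
    ∀ x : Fin n → ℝ,
      dstar (A + α • Matrix.vecMulVec v v) a b c Δ ≤
        lagr (A + α • Matrix.vecMulVec v v) a b c Δ x (-lambdaMin A) l2 := by
  intro x
  have hsymm : A.IsSymm := by simpa using hA
  have hav := dotProduct_eq_zero_of_forall_le_lagr A a b c Δ hv hvb hattain
  obtain ⟨u, hu0, hu, hvu⟩ :=
    exists_mulVec_eq_smul_dotProduct_eq_zero (A := A) (μ := lambdaMin A) (one_lt_two.trans hmult) v
  calc _ = dstar A a b c Δ :=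
        dstar_add_smul_vecMulVec_eq A a b c Δ hsymm hv hv1 hvb hav hu0 hu hvu hα.le
    _ ≤ lagr A a b c Δ x (-lambdaMin A) l2 := hattain x
    _ ≤ _ := by
      rw [lagr_add_smul_vecMulVec_self]
      exact le_add_of_nonneg_right (by positivity)

/-- Proposition 2 (Appendix). -/
theorem stmt16 {n : ℕ} (hn : 1 ≤ n) (A : Matrix (Fin n) (Fin n) ℝ) (hA : A.IsHermitian)
    (hnpd : ¬ A.PosDef) (a b : Fin n → ℝ) (c Δ : ℝ) (hΔ : 0 < Δ)
    (hslater : ∃ x : Fin n → ℝ, x ⬝ᵥ x < Δ ∧ b ⬝ᵥ x < c)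
    (hmult : 2 < eigMult A) (l2 : ℝ) (hl1 : 0 ≤ -lambdaMin A) (hl2 : 0 ≤ l2)
    (hattain : ∀ x : Fin n → ℝ, dstar A a b c Δ ≤ lagr A a b c Δ x (-lambdaMin A) l2)
    (v : Fin n → ℝ) (hv : A.mulVec v = lambdaMin A • v) (hv1 : v ⬝ᵥ v = 1)
    (hvb : v ⬝ᵥ b = 0) (α : ℝ) (hα : 0 < α) :
    ∀ x : Fin n → ℝ,
      dstar (A + α • Matrix.vecMulVec v v) a b c Δ ≤
        lagr (A + α • Matrix.vecMulVec v v) a b c Δ x (-lambdaMin A) l2 :=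
  stmt16_general A hA a b c Δ hmult l2 hattain v hv hv1 hvb α hα
end
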